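/- The sums S(q) = Σ_{n=1}^{q−1} 1/(2q sin(nπ/q)) satisfy S(q) = (1/π) log q + O(1) as q → ∞; that is, there exists a constant C such that |S(q) − (1/π) log q| ≤ C for all integers q ≥ 2. -/

import Mathlib

/-!
The function `1 / sin x - 1 / x - 1 / (π - x)` is invariant under `x ↦ π - x`, and on `(0, π/2]`
we have `0 ≤ 1 / sin x - 1 / x ≤ x`, so it is bounded on `(0, π)`. Hence up to an error of at
most `1` the sum `S(q)` equals `Σ_{n=1}^{q-1} (1 / (2πn) + 1 / (2π(q - n))) = H_{q-1} / π`, and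
`H_{q-1} = log q + O(1)`.
-/

open Real

/-- The elliptic sum `S(q) = Σ_{n=1}^{q−1} 1/(2q sin(nπ/q))`. -/
noncomputable def Sq (q : ℕ) : ℝ :=
  ∑ n ∈ Finset.Ico 1 q, 1 / (2 * (q:ℝ) * Real.sin (n*π/q))

open Finset

lemma one_div_sin_le_one_div_add_self {x : ℝ} (hx : 0 < x) (hx' : x ≤ π / 2) :
    1 / sin x ≤ 1 / x + x := by
  have hsin : 0 < sin x := sin_pos_of_pos_of_lt_pi hx (by linarith [pi_pos])
  have hcube := sin_ge_sub_cube hx.le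
  have hjordan : 2 / π * x ≤ sin x := mul_le_sin hx.le hx'
  have hsixth : x / 6 ≤ 2 / π * x := by
    rw [div_mul_eq_mul_div, div_le_div_iff₀ (by norm_num) pi_pos]
    nlinarith [pi_lt_four]
  have key : x ≤ (1 + x ^ 2) * sin x := by nlinarith [sq_nonneg x]
  rw [div_add' _ _ _ hx.ne', div_le_div_iff₀ hsin hx]
  nlinarith

lemma abs_one_div_sin_sub_poles_le {x : ℝ} (hx : 0 < x) (hx' : x < π) :
    |1 / sin x - 1 / x - 1 / (π - x)| ≤ 2 := by
  wlog hle : x ≤ π / 2 generalizing x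
  · have := this (x := π - x) (by linarith) (by linarith) (by linarith)
    rwa [sin_pi_sub, sub_sub_cancel, sub_right_comm] at this
  have hsin_le : 1 / x ≤ 1 / sin x := one_div_le_one_div_of_le
    (sin_pos_of_pos_of_lt_pi hx hx') (sin_lt hx).le
  have hsin_ge := one_div_sin_le_one_div_add_self hx hle
  have hcompl : 1 / (π - x) ≤ 1 := by
    rw [div_le_one (by linarith)]; linarith [pi_gt_three]
  have : 0 < 1 / (π - x) := one_div_pos.2 (by linarith)
  rw [abs_le]; constructor <;> linarith [pi_lt_four]

lemma sum_Ico_one_div_sub (q : ℕ) :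
    ∑ n ∈ Ico 1 q, 1 / ((q : ℝ) - n) = ∑ n ∈ Ico 1 q, 1 / (n : ℝ) := by
  rcases Nat.eq_zero_or_pos q with rfl | hq
  · simp
  have := sum_Ico_reflect (fun n => 1 / (n : ℝ)) 1 (m := q) (n := q) (by omega)
  rw [Nat.add_sub_cancel, Nat.add_sub_cancel_left] at this
  rw [← this]
  refine sum_congr rfl fun n hn => ?_
  rw [Nat.cast_sub (mem_Ico.1 hn).2.le]

lemma abs_sum_Ico_one_div_sub_log_le (q : ℕ) :
    |∑ n ∈ Ico 1 q, 1 / (n : ℝ) - log q| ≤ 1 := by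
  rcases q with _ | m
  · simp
  have hH : ∑ n ∈ Ico 1 (m + 1), 1 / (n : ℝ) = harmonic m := by
    simp [harmonic_eq_sum_Icc, Ico_add_one_right_eq_Icc]
  have hlog : log m ≤ log (m + 1 : ℕ) := by
    rcases m.eq_zero_or_pos with rfl | hm
    · simp
    exact log_le_log (by positivity) (by push_cast; linarith)
  rw [hH, abs_le]
  constructor <;> linarith [log_add_one_le_harmonic m, harmonic_le_one_add_log m]

lemma Sq_sub_sum_Ico_eq (q : ℕ) :
    Sq q - 1 / π * ∑ n ∈ Ico 1 q, 1 / (n : ℝ) = ∑ n ∈ Ico 1 q, 1 / (2 * q) *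
      (1 / sin (n * π / q) - 1 / (n * π / q) - 1 / (π - n * π / q)) := by
  rw [show 1 / π * ∑ n ∈ Ico 1 q, 1 / (n : ℝ) = ∑ n ∈ Ico 1 q, 1 / (2 * π) * (1 / (n : ℝ)) +
      ∑ n ∈ Ico 1 q, 1 / (2 * π) * (1 / ((q : ℝ) - n)) by
    rw [← mul_sum, ← mul_sum, sum_Ico_one_div_sub]; ring,
    Sq, ← sum_add_distrib, ← sum_sub_distrib]
  refine sum_congr rfl fun n hn => ?_
  have hnq : (n : ℝ) < q := by exact_mod_cast (mem_Ico.1 hn).2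
  have : (q : ℝ) ≠ 0 := by linarith [n.cast_nonneg (α := ℝ)]
  have : (q : ℝ) - n ≠ 0 := by linarith
  field_simp
  ring

lemma abs_Sq_sub_sum_Ico_le (q : ℕ) :
    |Sq q - 1 / π * ∑ n ∈ Ico 1 q, 1 / (n : ℝ)| ≤ 1 := by
  rcases Nat.eq_zero_or_pos q with rfl | hq
  · simp [Sq]
  have hq' : (0 : ℝ) < q := by exact_mod_cast hq
  have hterm : ∀ n ∈ Ico 1 q, |1 / (2 * q) *
      (1 / sin (n * π / q) - 1 / (n * π / q) - 1 / (π - n * π / q))| ≤ 1 / q := by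
    intro n hn
    have hn0 : (0 : ℝ) < n := by exact_mod_cast (mem_Ico.1 hn).1
    have hnq : (n : ℝ) < q := by exact_mod_cast (mem_Ico.1 hn).2
    have hx : n * π / q < π := by rw [div_lt_iff₀ hq']; nlinarith [pi_pos]
    rw [abs_mul, abs_of_pos (by positivity)]
    calc 1 / (2 * q) * |1 / sin (n * π / q) - 1 / (n * π / q) - 1 / (π - n * π / q)|
        ≤ 1 / (2 * q) * 2 := by gcongr; exact abs_one_div_sin_sub_poles_le (by positivity) hx
      _ = 1 / q := by field_simp
  rw [Sq_sub_sum_Ico_eq]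
  calc _ ≤ _ := abs_sum_le_sum_abs _ _
    _ ≤ ∑ n ∈ Ico 1 q, 1 / (q : ℝ) := sum_le_sum hterm
    _ ≤ 1 := by
        rw [sum_const, Nat.card_Ico, nsmul_eq_mul, mul_one_div, div_le_one hq']
        exact_mod_cast Nat.sub_le q 1

theorem elliptic_sum_asymptotic :
    ∃ C : ℝ, ∀ q : ℕ, 2 ≤ q → |Sq q - (1/π) * Real.log q| ≤ C := by
  refine ⟨2, fun q _ => ?_⟩
  set H := ∑ n ∈ Ico 1 q, 1 / (n : ℝ)
  have hπ : 1 / π ≤ 1 := by rw [div_le_one pi_pos]; linarith [pi_gt_three]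
  calc |Sq q - 1 / π * log q|
      = |(Sq q - 1 / π * H) + 1 / π * (H - log q)| := by ring_nf
    _ ≤ |Sq q - 1 / π * H| + 1 / π * |H - log q| :=
        (abs_add_le _ _).trans_eq (by rw [abs_mul, abs_of_pos (one_div_pos.2 pi_pos)])
    _ ≤ 1 + 1 * 1 := by
        gcongr
        exacts [abs_Sq_sub_sum_Ico_le q, abs_sum_Ico_one_div_sub_log_le q]
    _ = 2 := by norm_num
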